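/- arXiv:1301.4550 — 7 statements merged into one kernel-verified Lean document; each statement's English description precedes it below -/
import Mathlib

section
/- Let X have main blocks X_1,...,X_n with sizes q_1,...,q_n and additional block Y of size 1. The number of (n+1)-element subsets of X ∪ Y meeting every main block equals q_1·q_2···q_n · (q_1 + q_2 + ... + q_n − n + 2)/2. -/
/-!
An `(n+1)`-set meeting all `n` blocks either contains the point `y` of `Y`, and then meets
every `X i` exactly once (`∏ q i` choices), or avoids `y` and meets exactly one `X j` in two
points (`∑ j, C(q j, 2) * ∏_{i ≠ j} q i` choices). Since
`2 * C(q j, 2) * ∏_{i ≠ j} q i = (q j - 1) * ∏ q i`, the total is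
`∏ q i * (∑ (q j - 1) + 2) / 2`.
In both cases the sets are counted through their profile `i ↦ #(S ∩ X i)`: the sets with a
given profile `k` number `∏ C(q i, k i)`.
-/

open Finset Function

variable {α ι : Type*} [DecidableEq α]

lemma card_filter_powersetCard_succ_insert {s : Finset α} {y : α} (hy : y ∉ s) (m : ℕ)
    (P : Finset α → Prop) [DecidablePred P] :
    #{S ∈ (insert y s).powersetCard (m + 1) | P S} =
      #{S ∈ s.powersetCard (m + 1) | P S} + #{T ∈ s.powersetCard m | P (insert y T)} := by
  rw [powersetCard_succ_insert hy, filter_union, card_union_of_disjoint, filter_image,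
    card_image_of_injOn]
  · exact insert_erase_invOn.2.injOn.mono fun T hT =>
      notMem_mono (mem_powersetCard.1 (mem_filter.1 hT).1).1 hy
  · refine disjoint_left.2 fun S hS hS' => ?_
    obtain ⟨T, -, rfl⟩ := mem_image.1 (mem_filter.1 hS').1
    exact hy ((mem_powersetCard.1 (mem_filter.1 hS).1).1 (mem_insert_self y T))

lemma card_filter_powerset_union_of_disjoint {A C : Finset α} (hAC : Disjoint A C)
    (P Q : Finset α → Prop) [DecidablePred P] [DecidablePred Q] :
    #{S ∈ (A ∪ C).powerset | P (S ∩ A) ∧ Q (S ∩ C)} =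
      #{S ∈ A.powerset | P S} * #{S ∈ C.powerset | Q S} := by
  have inter_left {T R : Finset α} (hT : T ⊆ A) (hR : R ⊆ C) : (T ∪ R) ∩ A = T := by
    rw [union_inter_distrib_right, inter_eq_left.2 hT,
      disjoint_iff_inter_eq_empty.1 (hAC.symm.mono_left hR), union_empty]
  have inter_right {T R : Finset α} (hT : T ⊆ A) (hR : R ⊆ C) : (T ∪ R) ∩ C = R := by
    rw [union_inter_distrib_right, inter_eq_left.2 hR,
      disjoint_iff_inter_eq_empty.1 (hAC.mono_left hT), empty_union]
  rw [← card_product]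
  refine card_nbij' (fun S => (S ∩ A, S ∩ C)) (fun p => p.1 ∪ p.2) ?_ ?_ ?_ ?_
  · intro S hS
    simp only [coe_filter, Set.mem_ofPred_eq, mem_powerset] at hS
    simp only [coe_product, coe_filter, Set.mem_prod, Set.mem_ofPred_eq, mem_powerset]
    exact ⟨⟨inter_subset_right, hS.2.1⟩, inter_subset_right, hS.2.2⟩
  · rintro ⟨T, R⟩ hTR
    simp only [coe_product, coe_filter, Set.mem_prod, Set.mem_ofPred_eq, mem_powerset] at hTR
    obtain ⟨hT, hR⟩ := hTR
    simp only [coe_filter, Set.mem_ofPred_eq, mem_powerset]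
    rw [inter_left hT.1 hR.1, inter_right hT.1 hR.1]
    exact ⟨union_subset_union hT.1 hR.1, hT.2, hR.2⟩
  · intro S hS
    simp only [coe_filter, Set.mem_ofPred_eq, mem_powerset] at hS
    change S ∩ A ∪ S ∩ C = S
    rw [← inter_union_distrib_left, inter_eq_left.2 hS.1]
  · rintro ⟨T, R⟩ hTR
    simp only [coe_product, coe_filter, Set.mem_prod, Set.mem_ofPred_eq, mem_powerset] at hTR
    obtain ⟨hT, hR⟩ := hTR
    change ((T ∪ R) ∩ A, (T ∪ R) ∩ C) = (T, R)
    rw [inter_left hT.1 hR.1, inter_right hT.1 hR.1]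

lemma card_filter_powerset_biUnion_card_inter_eq [DecidableEq ι] (s : Finset ι)
    {B : ι → Finset α} (hB : (s : Set ι).PairwiseDisjoint B) (k : ι → ℕ) :
    #{S ∈ (s.biUnion B).powerset | ∀ i ∈ s, #(S ∩ B i) = k i} =
      ∏ i ∈ s, (#(B i)).choose (k i) := by
  induction s using Finset.induction with
  | empty => simp
  | @insert a s ha ih =>
    have hBa : Disjoint (B a) (s.biUnion B) := (disjoint_biUnion_right _ _ _).2 fun i hi =>
      hB (mem_insert_self a s) (mem_insert_of_mem hi) (ne_of_mem_of_not_mem hi ha).symm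
    have hsplit (S : Finset α) : (∀ i ∈ insert a s, #(S ∩ B i) = k i) ↔
        #(S ∩ B a) = k a ∧ ∀ i ∈ s, #(S ∩ s.biUnion B ∩ B i) = k i := by
      rw [forall_mem_insert]
      refine and_congr_right' (forall₂_congr fun i hi => ?_)
      rw [inter_assoc, inter_eq_right.2 (subset_biUnion_of_mem B hi)]
    rw [biUnion_insert, filter_congr fun S _ => hsplit S,
      card_filter_powerset_union_of_disjoint hBa (fun T => #T = k a)
        (fun T => ∀ i ∈ s, #(T ∩ B i) = k i),
      ← powersetCard_eq_filter, card_powersetCard,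
      ih (hB.subset (coe_subset.2 (subset_insert a s))), prod_insert ha]

lemma card_eq_sum_card_inter [Fintype ι] {B : ι → Finset α} (hB : Pairwise (Disjoint on B))
    {S : Finset α} (hS : S ⊆ univ.biUnion B) : #S = ∑ i, #(S ∩ B i) := by
  rw [← card_biUnion fun i _ j _ hij => (hB hij).mono inter_subset_right inter_subset_right,
    ← inter_biUnion, inter_eq_left.2 hS]

lemma card_filter_powersetCard_forall_nonempty [Fintype ι] {B : ι → Finset α}
    (hB : Pairwise (Disjoint on B)) (m : ℕ) (K : Finset (ι → ℕ))
    (hK : ∀ k : ι → ℕ, k ∈ K ↔ (∀ i, 1 ≤ k i) ∧ ∑ i, k i = m) :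
    #{S ∈ (univ.biUnion B).powersetCard m | ∀ i, (S ∩ B i).Nonempty} =
      ∑ k ∈ K, ∏ i, (#(B i)).choose (k i) := by
  classical
  have hprofile : {S ∈ (univ.biUnion B).powersetCard m | ∀ i, (S ∩ B i).Nonempty} =
      {S ∈ (univ.biUnion B).powerset | (fun i => #(S ∩ B i)) ∈ K} := by
    ext S
    simp only [mem_filter, mem_powersetCard, mem_powerset, hK, ← card_pos,
      Nat.one_le_iff_ne_zero, Nat.pos_iff_ne_zero]
    constructor
    · rintro ⟨⟨hS, rfl⟩, hne⟩
      exact ⟨hS, hne, (card_eq_sum_card_inter hB hS).symm⟩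
    · rintro ⟨hS, hne, hsum⟩
      exact ⟨⟨hS, (card_eq_sum_card_inter hB hS).trans hsum⟩, hne⟩
  have hmaps : Set.MapsTo (fun S i => #(S ∩ B i))
      (({S ∈ (univ.biUnion B).powerset | (fun i => #(S ∩ B i)) ∈ K} : Finset (Finset α)) :
        Set (Finset α)) K :=
    fun S hS => (mem_filter.1 (mem_coe.1 hS)).2
  rw [hprofile, card_eq_sum_card_fiberwise hmaps]
  refine sum_congr rfl fun k hk => ?_
  rw [filter_filter, ← card_filter_powerset_biUnion_card_inter_eq univ
    (fun i _ j _ hij => hB hij) k]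
  congr 1
  ext S
  simp only [mem_filter, mem_univ, true_imp_iff, funext_iff]
  exact and_congr_right fun _ => ⟨fun h => h.2, fun h => ⟨funext h ▸ hk, h⟩⟩

lemma forall_one_le_and_sum_eq_card_iff [Fintype ι] {k : ι → ℕ} :
    (∀ i, 1 ≤ k i) ∧ ∑ i, k i = Fintype.card ι ↔ k = 1 := by
  constructor
  · rintro ⟨hk, hsum⟩
    rw [Fintype.card_eq_sum_ones, eq_comm, sum_eq_sum_iff_of_le fun i _ => hk i] at hsum
    exact funext fun i => (hsum i (mem_univ i)).symm
  · rintro rfl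
    simp

lemma forall_one_le_and_sum_eq_card_add_one_iff [Fintype ι] [DecidableEq ι] {k : ι → ℕ} :
    (∀ i, 1 ≤ k i) ∧ ∑ i, k i = Fintype.card ι + 1 ↔
      ∃ j, k = update (1 : ι → ℕ) j 2 := by
  have update_le (j : ι) : ∀ i, 1 ≤ update (1 : ι → ℕ) j 2 i := by
    intro i; rcases eq_or_ne i j with rfl | h <;> simp [*]
  have sum_update (j : ι) : ∑ i, update (1 : ι → ℕ) j 2 i = Fintype.card ι + 1 := by
    rw [sum_update_of_mem (mem_univ j)]
    have := Fintype.card_pos_iff.2 ⟨j⟩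
    simp only [card_univ_sdiff, card_singleton, Pi.one_apply, sum_const, smul_eq_mul, mul_one]
    omega
  constructor
  · rintro ⟨hk, hsum⟩
    obtain ⟨j, hj⟩ : ∃ j, 2 ≤ k j := by
      by_contra! hlt
      have hk1 : k = 1 := funext fun i => by
        have := hk i; have := hlt i; simp only [Pi.one_apply]; omega
      have := (forall_one_le_and_sum_eq_card_iff.2 hk1).2
      omega
    have hle : ∀ i ∈ univ, update (1 : ι → ℕ) j 2 i ≤ k i := fun i _ => by
      rcases eq_or_ne i j with rfl | h <;> simp [*]
    exact ⟨j, funext fun i =>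
      ((sum_eq_sum_iff_of_le hle).1 (by rw [sum_update j, hsum]) i (mem_univ i)).symm⟩
  · rintro ⟨j, rfl⟩
    exact ⟨update_le j, sum_update j⟩

lemma injective_update_one {β : Type*} [DecidableEq ι] [One β] {b : β} (hb : b ≠ 1) :
    Injective fun j : ι => update (1 : ι → β) j b := by
  intro j j' h
  by_contra hne
  simpa [hne, hb] using congr_fun h j

lemma prod_choose_update_one [Fintype ι] [DecidableEq ι] (q : ι → ℕ) (j : ι) (b : ℕ) :
    ∏ i, (q i).choose (update (1 : ι → ℕ) j b i) =
      (q j).choose b * ∏ i ∈ univ.erase j, q i := by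
  rw [← mul_prod_erase univ _ (mem_univ j), update_self]
  refine congr_arg _ (prod_congr rfl fun i hi => ?_)
  rw [update_of_ne (ne_of_mem_erase hi), Pi.one_apply, Nat.choose_one_right]

lemma two_mul_prod_add_sum_choose_two_mul_prod_erase [Fintype ι] [DecidableEq ι] {q : ι → ℕ}
    (hq : ∀ i, 1 ≤ q i) :
    2 * (∏ i, q i + ∑ j, (q j).choose 2 * ∏ i ∈ univ.erase j, q i) =
      (∏ i, q i) * (∑ i, q i - Fintype.card ι + 2) := by
  have hsum : ∑ i, q i - Fintype.card ι = ∑ i, (q i - 1) := by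
    rw [Fintype.card_eq_sum_ones, sum_tsub_distrib _ fun i _ => hq i]
  have hterm (j : ι) :
      2 * ((q j).choose 2 * ∏ i ∈ univ.erase j, q i) = (∏ i, q i) * (q j - 1) := by
    rw [← mul_prod_erase univ q (mem_univ j), ← mul_assoc, Nat.choose_two_right,
      Nat.mul_div_cancel' (Nat.even_mul_pred_self (q j)).two_dvd]
    ring
  rw [hsum, mul_add, mul_sum, sum_congr rfl fun j _ => hterm j, mul_add, mul_sum]
  ring

/-- With main blocks `X 0, …, X (n-1)` of sizes `q 0, …, q (n-1)` (each nonempty) and an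
additional block `Y` of size 1, the number of `(n+1)`-element subsets meeting every main
block equals `q 0 ⋯ q (n-1) * (q 0 + ⋯ + q (n-1) - n + 2) / 2`. -/
theorem insets_n_plus_one {α : Type} [DecidableEq α] (n : ℕ)
    (X : Fin n → Finset α) (Y : Finset α) (q : Fin n → ℕ)
    (hdisj : ∀ i j : Fin n, i ≠ j → Disjoint (X i) (X j))
    (hY : ∀ i : Fin n, Disjoint (X i) Y)
    (hq : ∀ i, (X i).card = q i) (hqpos : ∀ i, 1 ≤ q i) (hm : Y.card = 1) :
    (((Finset.univ.biUnion X ∪ Y).powersetCard (n + 1)).filter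
        (fun S => ∀ i : Fin n, (S ∩ X i).Nonempty)).card
      = (∏ i, q i) * ((∑ i, q i) - n + 2) / 2 := by
  obtain ⟨y, rfl⟩ := card_eq_one.1 hm
  have hyX (i : Fin n) : y ∉ X i := disjoint_singleton_right.1 (hY i)
  have hyU : y ∉ univ.biUnion X := by simpa using hyX
  -- `convert`: over `Fin n` the predicate is decided by `Nat.decidableForallFin`, not by the
  -- `Fintype` instance used in the general lemma.
  have hcount (m : ℕ) (K : Finset (Fin n → ℕ))
      (hK : ∀ k : Fin n → ℕ, k ∈ K ↔ (∀ i, 1 ≤ k i) ∧ ∑ i, k i = m) :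
      #{S ∈ (univ.biUnion X).powersetCard m | ∀ i, (S ∩ X i).Nonempty} =
        ∑ k ∈ K, ∏ i, (#(X i)).choose (k i) := by
    convert card_filter_powersetCard_forall_nonempty (fun i j => hdisj i j) m K hK
  have hsum := two_mul_prod_add_sum_choose_two_mul_prod_erase hqpos
  rw [Fintype.card_fin] at hsum
  rw [union_singleton, card_filter_powersetCard_succ_insert hyU]
  simp_rw [insert_inter_of_notMem (hyX _)]
  rw [hcount (n + 1) (univ.image fun j => update 1 j 2) fun k => by
      simpa [eq_comm] using (forall_one_le_and_sum_eq_card_add_one_iff (k := k)).symm,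
    hcount n {1} fun k => by simpa using (forall_one_le_and_sum_eq_card_iff (k := k)).symm,
    sum_image (injective_update_one (by decide : (2 : ℕ) ≠ 1)).injOn, sum_singleton]
  simp only [hq, prod_choose_update_one, Pi.one_apply, Nat.choose_one_right]
  omega
end

section
/- For all nonnegative integers m, k and positive integer q: Σ_{i=0}^{n} (-1)^i C(n,i) C(nq + m − iq, n+k) with q = 1 reduces to the identity C(m,k) = Σ_{i=0}^{n} (-1)^i C(n,i) C(n + m − i, n + k). -/
open Finset fwdDiff

theorem fwdDiff_iter_one_eq_alternating_sum {G : Type*} [AddCommGroup G] (f : ℕ → G) (n m : ℕ) :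
    (Δ_[1])^[n] f m = ∑ i ∈ range (n + 1), ((-1 : ℤ) ^ i * n.choose i) • f (n + m - i) := by
  rw [fwdDiff_iter_eq_sum_shift, ← sum_range_reflect]
  refine sum_congr rfl fun i hi => ?_
  have hi : i ≤ n := Nat.lt_succ_iff.mp (mem_range.mp hi)
  rw [Nat.add_sub_cancel, Nat.sub_sub_self hi, Nat.choose_symm hi, smul_eq_mul, mul_one]
  congr 2
  omega

/-- The binomial identity `C(m,k) = ∑_{i=0}^{n} (-1)^i C(n,i) C(n+m-i, n+k)`. -/
theorem binomial_alternating_identity (m n k : ℕ) :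
    (m.choose k : ℤ)
      = ∑ i ∈ Finset.range (n + 1),
          (-1 : ℤ) ^ i * n.choose i * (n + m - i).choose (n + k) := by
  -- Pascal's rule makes `x ↦ C(x, k)` the `n`-th forward difference of `x ↦ C(x, n + k)`.
  rw [← congrFun (fwdDiff_iter_choose k n) m, fwdDiff_iter_one_eq_alternating_sum]
  simp only [smul_eq_mul]
end

section
/- For all positive integers q, n and all nonnegative integers m: q^n = Σ_{i=0}^{n} (-1)^i C(n,i) C(qn + m − qi, n). -/
/-!
The function `x ↦ C(qx + m, n)` on `ℕ` is a polynomial of degree `n` in `x` with leading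
coefficient `qⁿ / n!`, so its `n`-th forward difference is the constant `qⁿ`. Expanding that
difference at `0` as an alternating sum of values gives the identity, after reindexing `i ↦ n - i`.
Over `ℤ` the degree count comes from Vandermonde's identity:
`Δ C(qx + m, j + 1) = ∑_{a ≥ 1} C(q, a) C(qx + m, j + 1 - a)`, which lowers `j` and contributes
a factor `q = C(q, 1)` in its top term.
-/

open Finset Function fwdDiff

lemma fwdDiff_choose_mul_add (q m j : ℕ) :
    Δ_[1] (fun x : ℕ ↦ ((q * x + m).choose (j + 1) : ℤ))
      = ∑ a ∈ range (j + 1),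
          (q.choose (a + 1) : ℤ) • fun x : ℕ ↦ ((q * x + m).choose (j - a) : ℤ) := by
  ext x
  -- the `a = 0` term of Vandermonde's sum is `C(qx + m, j + 1)`, which the difference cancels
  have vandermonde : (q * (x + 1) + m).choose (j + 1)
      = ∑ a ∈ range (j + 2), q.choose a * (q * x + m).choose (j + 1 - a) := by
    rw [show q * (x + 1) + m = q + (q * x + m) by ring, Nat.add_choose_eq,
      Nat.sum_antidiagonal_eq_sum_range_succ_mk]
  simp only [fwdDiff, vandermonde, sum_range_succ', Nat.choose_zero_right, one_mul,
    Nat.sub_zero, Finset.sum_apply, Pi.smul_apply, smul_eq_mul, Nat.succ_sub_succ_eq_sub]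
  push_cast
  ring

lemma fwdDiff_iter_choose_mul_add_of_lt (q m : ℕ) {j k : ℕ} (hjk : j < k) :
    (Δ_[1])^[k] (fun x : ℕ ↦ ((q * x + m).choose j : ℤ)) = 0 := by
  induction k generalizing j with
  | zero => omega
  | succ k ih =>
    rw [iterate_succ_apply]
    cases j with
    | zero =>
      simp only [Nat.choose_zero_right, Nat.cast_one, fwdDiff_const]
      exact iterate_fixed (fwdDiff_const 1 0) k
    | succ j =>
      rw [fwdDiff_choose_mul_add, fwdDiff_iter_finsetSum]
      refine sum_eq_zero fun a _ ↦ ?_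
      rw [fwdDiff_iter_const_smul, ih (by omega), smul_zero]

lemma fwdDiff_iter_choose_mul_add_self (q m n : ℕ) :
    (Δ_[1])^[n] (fun x : ℕ ↦ ((q * x + m).choose n : ℤ)) = fun _ ↦ (q : ℤ) ^ n := by
  induction n with
  | zero => ext; simp
  | succ n ih =>
    rw [iterate_succ_apply, fwdDiff_choose_mul_add, fwdDiff_iter_finsetSum, sum_range_succ',
      sum_eq_zero fun a ha ↦ by
        rw [fwdDiff_iter_const_smul, fwdDiff_iter_choose_mul_add_of_lt q m
          (by simp at ha; omega), smul_zero],
      zero_add, fwdDiff_iter_const_smul, Nat.sub_zero, ih]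
    ext
    simp [pow_succ, mul_comm]

theorem power_alternating_identity_general (q n m : ℕ) :
    ((q : ℤ)) ^ n
      = ∑ i ∈ Finset.range (n + 1),
          (-1 : ℤ) ^ i * n.choose i * (q * n + m - q * i).choose n := by
  have newton := fwdDiff_iter_eq_sum_shift 1 (fun x : ℕ ↦ ((q * x + m).choose n : ℤ)) n 0
  rw [fwdDiff_iter_choose_mul_add_self] at newton
  rw [show (q : ℤ) ^ n = _ from newton, ← sum_range_reflect]
  refine sum_congr rfl fun i hi ↦ ?_
  have hin : i ≤ n := Nat.lt_succ_iff.mp (mem_range.mp hi)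
  have hshift : q * (n - i) + m = q * n + m - q * i := by
    rw [Nat.mul_sub]; have := Nat.mul_le_mul_left q hin; omega
  rw [Nat.add_sub_cancel, Nat.sub_sub_self hin, ← Nat.choose_symm hin, smul_eq_mul, zero_add,
    smul_eq_mul, mul_one, hshift]

/-- For positive integers `q, n` and nonnegative `m`:
`q^n = ∑_{i=0}^{n} (-1)^i C(n,i) C(qn + m - qi, n)`. -/
theorem power_alternating_identity (q n m : ℕ) (hq : 1 ≤ q) (hn : 1 ≤ n) :
    ((q : ℤ)) ^ n
      = ∑ i ∈ Finset.range (n + 1),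
          (-1 : ℤ) ^ i * n.choose i * (q * n + m - q * i).choose n :=
  power_alternating_identity_general q n m
end

section
/- For all nonnegative integers m, n, k: the number of (n+k)-insets of a set with n main blocks each of size 2 and additional block of size m equals 2^{n-k} Σ_{i=0}^{m} 2^i C(m,i) C(n, k−i). -/
/-- `insetCount n m k q` is the number of `(n+k)`-insets: subsets of cardinality `n + k` of
the disjoint union of main blocks of sizes `q 0, …, q (n-1)` and an additional block of
size `m`, meeting every main block.  (For negative `k` the count is `0`.) -/
def insetCount (n m : ℕ) (k : ℤ) (q : Fin n → ℕ) : ℕ :=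
  (Finset.univ.filter
    (fun S : Finset ((Σ i : Fin n, Fin (q i)) ⊕ Fin m) =>
      (S.card : ℤ) = n + k ∧ ∀ i : Fin n, ∃ x : Fin (q i), Sum.inl ⟨i, x⟩ ∈ S)).card

/-!
A subset of the union of the blocks is the same as a choice of a subset of each block, so the
generating polynomial `∑ X ^ #S` of the insets factors: a main block of size `q` contributes its
nonempty subsets, `(X + 1) ^ q - 1`, and the additional block all of its subsets, `(X + 1) ^ m`.
For main blocks of size `2` the factor is `X (X + 2)`, so the number of `(n + k)`-insets is the
coefficient of `X ^ k` in `(X + 1) ^ m (X + 2) ^ n`, which is the convolution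
`∑ C(m, i) 2 ^ (n - (k - i)) C(n, k - i)` of two binomial expansions.
-/

open Finset Polynomial

noncomputable def Finset.sigmaEquivPi {ι : Type*} {κ : ι → Type*} [Fintype ι] :
    Finset (Σ i, κ i) ≃ ∀ i, Finset (κ i) where
  toFun s i := s.preimage (Sigma.mk i) sigma_mk_injective.injOn
  invFun f := univ.sigma f
  left_inv s := by ext ⟨i, x⟩; simp
  right_inv f := by ext i x; simp

section GeneratingPolynomial

variable {R : Type*} [CommRing R]

lemma coeff_sum_X_pow {ι : Type*} (s : Finset ι) (d : ι → ℕ) (N : ℕ) :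
    (∑ i ∈ s, (X : R[X]) ^ d i).coeff N = #{i ∈ s | d i = N} := by
  simp [finsetSum_coeff, coeff_X_pow, eq_comm]

lemma sum_X_pow_card (α : Type*) [Fintype α] :
    ∑ s : Finset α, (X : R[X]) ^ #s = (X + 1) ^ Fintype.card α := by
  simpa using Fintype.sum_pow_mul_eq_add_pow α (X : R[X]) 1

lemma sum_ite_nonempty_X_pow_card (α : Type*) [Fintype α] :
    ∑ s : Finset α, (if s.Nonempty then (X : R[X]) ^ #s else 0) = (X + 1) ^ Fintype.card α - 1 := by
  classical
  rw [eq_sub_iff_add_eq, ← sum_X_pow_card, ← sum_erase_add _ _ (mem_univ ∅),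
    ← sum_erase_add _ _ (mem_univ (∅ : Finset α))]
  simp only [Finset.not_nonempty_empty, if_false, add_zero, card_empty, pow_zero]
  refine congrArg (· + 1) (sum_congr rfl fun s hs => ?_)
  rw [if_pos (nonempty_iff_ne_empty.2 (ne_of_mem_erase hs))]

lemma sum_X_pow_card_meeting_blocks {ι : Type*} [Fintype ι] [DecidableEq ι] {κ : ι → Type*}
    [∀ i, Fintype (κ i)] [∀ i, DecidableEq (κ i)] {β : Type*} [Fintype β] [DecidableEq β] :
    ∑ S : Finset ((Σ i, κ i) ⊕ β) with ∀ i, ∃ x, Sum.inl ⟨i, x⟩ ∈ S, (X : R[X]) ^ #S =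
      (∏ i, ((X + 1) ^ Fintype.card (κ i) - 1)) * (X + 1) ^ Fintype.card β := by
  let e : Finset ((Σ i, κ i) ⊕ β) ≃ (∀ i, Finset (κ i)) × Finset β :=
    sumEquiv.toEquiv.trans (sigmaEquivPi.prodCongr (Equiv.refl _))
  have summand (p : (∀ i, Finset (κ i)) × Finset β) :
      (if ∀ i, ∃ x, Sum.inl ⟨i, x⟩ ∈ e.symm p then (X : R[X]) ^ #(e.symm p) else 0)
        = (∏ i, if (p.1 i).Nonempty then X ^ #(p.1 i) else 0) * X ^ #p.2 := by
    have he : e.symm p = (univ.sigma p.1).disjSum p.2 := rfl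
    rw [Fintype.prod_ite_zero, ite_zero_mul, prod_pow_eq_pow_sum, ← pow_add, he, card_disjSum,
      card_sigma]
    simp only [inl_mem_disjSum, mem_sigma, mem_univ, true_and, Finset.Nonempty]
    -- the two sides differ only in their `Decidable` instances
    congr
  rw [sum_filter, ← e.symm.sum_comp]
  simp_rw [summand, ← sum_ite_nonempty_X_pow_card, ← sum_X_pow_card, Fintype.prod_sum,
    Fintype.sum_mul_sum, Fintype.sum_prod_type]

theorem insetCount_eq_coeff (n m k : ℕ) (q : Fin n → ℕ) :
    (insetCount n m k q : R) = ((∏ i, ((X + 1) ^ q i - 1)) * (X + 1) ^ m : R[X]).coeff (n + k) := by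
  have h := sum_X_pow_card_meeting_blocks (R := R) (κ := fun i => Fin (q i)) (β := Fin m)
  simp only [Fintype.card_fin] at h
  rw [← h, coeff_sum_X_pow, filter_filter, insetCount]
  congr 3
  ext S
  rw [and_comm]
  norm_cast

end GeneratingPolynomial

lemma coeff_X_add_C_pow_mul_X_add_C_pow {R : Type*} [CommSemiring R] (a b : R) (m n k : ℕ) :
    ((X + C a) ^ m * (X + C b) ^ n).coeff k
      = ∑ i ∈ range (k + 1), a ^ (m - i) * m.choose i * (b ^ (n - (k - i)) * n.choose (k - i)) := by
  simp only [coeff_mul, Finset.Nat.sum_antidiagonal_eq_sum_range_succ_mk, coeff_X_add_C_pow]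

lemma sum_range_eq_sum_range_ite {M : Type*} [AddCommMonoid M] {f : ℕ → M} {m : ℕ}
    (hf : ∀ i, m < i → f i = 0) (k : ℕ) :
    ∑ i ∈ range (k + 1), f i = ∑ i ∈ range (m + 1), if i ≤ k then f i else 0 := by
  rw [← sum_filter, ← sum_filter_of_ne (p := (· ≤ m)) fun i _ h => not_lt.1 (mt (hf i) h)]
  congr 1
  ext i
  simp only [mem_filter, mem_range]
  omega

lemma zpow_sub_mul_pow_mul_choose {K : Type*} [DivisionRing K] {a : K} (ha : a ≠ 0) {i k : ℕ}
    (hik : i ≤ k) (n : ℕ) :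
    a ^ ((n : ℤ) - k) * a ^ i * n.choose (k - i) = a ^ (n - (k - i)) * n.choose (k - i) := by
  rcases le_or_gt (k - i) n with h | h
  · rw [← zpow_natCast, ← zpow_add₀ ha, ← zpow_natCast]
    congr 2
    omega
  · rw [Nat.choose_eq_zero_of_lt h, Nat.cast_zero, mul_zero, mul_zero]

/-- The explicit formula for all blocks of size `2`:
`F(m,n,k) = 2^(n-k) ∑_{i=0}^{m} 2^i C(m,i) C(n, k-i)`, where `C(n, k-i) = 0` for `k-i < 0`. -/
theorem insetCount_blocks_two (n m k : ℕ) :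
    (insetCount n m (k : ℤ) (fun _ => 2) : ℚ)
      = (2 : ℚ) ^ ((n : ℤ) - (k : ℤ)) *
          ∑ i ∈ Finset.range (m + 1),
            if i ≤ k then ((2 ^ i * m.choose i * n.choose (k - i) : ℕ) : ℚ) else 0 := by
  have hblock : (X + 1 : ℚ[X]) ^ 2 - 1 = X * (X + C 2) := by rw [C_ofNat]; ring
  have hpoly : (∏ _i : Fin n, ((X + 1 : ℚ[X]) ^ 2 - 1)) * (X + 1) ^ m
      = (X + C 1) ^ m * (X + C 2) ^ n * X ^ n := by
    rw [hblock, prod_const, card_univ, Fintype.card_fin, mul_pow, map_one]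
    ring
  rw [insetCount_eq_coeff, hpoly, add_comm n, coeff_mul_X_pow, coeff_X_add_C_pow_mul_X_add_C_pow,
    sum_range_eq_sum_range_ite (m := m) fun i hi => by simp [Nat.choose_eq_zero_of_lt hi], mul_sum]
  refine sum_congr rfl fun i _ => ?_
  split_ifs with hik
  · push_cast
    rw [← zpow_sub_mul_pow_mul_choose two_ne_zero hik]
    ring
  · rw [mul_zero]
end

section
/- For m ≥ 0: the number of 4-insets of a set with main blocks of sizes 2 and 3 and an additional block of size m equals 3(m+1)^2 + 2. -/
/-!
A 4-subset of `X₁ ∪ X₂ ∪ Y` fails to be an inset exactly when it avoids `X₁` or avoids `X₂`,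
and the 4-subsets avoiding a block are the 4-subsets of its complement. Inclusion–exclusion
therefore counts the insets as `C(m+5,4) - C(m+3,4) - C(m+2,4) + C(m,4)`, and this alternating sum
of quartic polynomials in `m` collapses to `3(m+1)^2 + 2`.
-/

open Finset

theorem choose_four_add_choose_four (m : ℕ) :
    (m + 5).choose 4 + m.choose 4 = 3 * (m + 1) ^ 2 + 2 + (m + 3).choose 4 + (m + 2).choose 4 := by
  have cast_choose_four (n : ℕ) : (n.choose 4 : ℚ) = n * (n - 1) * (n - 2) * (n - 3) / 24 := by
    rw [Nat.cast_choose_eq_descPochhammer_div]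
    simp [descPochhammer_succ_right, Nat.factorial]
  qify
  simp only [cast_choose_four]
  push_cast
  ring

section

variable {α : Type*} [DecidableEq α]

theorem filter_disjoint_powersetCard (s t : Finset α) (k : ℕ) :
    (s.powersetCard k).filter (Disjoint · t) = (s \ t).powersetCard k := by
  ext S
  simp only [mem_filter, mem_powersetCard, subset_sdiff]
  tauto

theorem card_filter_and_add_card_filter_not_add_card_filter_not (s : Finset α)
    (p q : α → Prop) [DecidablePred p] [DecidablePred q] :
    #(s.filter fun x => p x ∧ q x) + #(s.filter fun x => ¬p x) + #(s.filter fun x => ¬q x)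
      = #s + #(s.filter fun x => ¬p x ∧ ¬q x) := by
  have hunion := card_union_add_card_inter (s.filter fun x => ¬p x) (s.filter fun x => ¬q x)
  have hsplit := card_filter_add_card_filter_not (s := s) (p := fun x => p x ∧ q x)
  rw [← filter_or, ← filter_and] at hunion
  simp only [not_and_or] at hsplit
  omega

theorem card_filter_powersetCard_inter_nonempty_and (U A B : Finset α) (hA : A ⊆ U)
    (hB : B ⊆ U) (k : ℕ) :
    #((U.powersetCard k).filter fun S => (S ∩ A).Nonempty ∧ (S ∩ B).Nonempty)
        + (#U - #A).choose k + (#U - #B).choose k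
      = (#U).choose k + (#U - #(A ∪ B)).choose k := by
  have key := card_filter_and_add_card_filter_not_add_card_filter_not (U.powersetCard k)
    (fun S => (S ∩ A).Nonempty) (fun S => (S ∩ B).Nonempty)
  simp only [← not_disjoint_iff_nonempty_inter, not_not, ← disjoint_union_right,
    filter_disjoint_powersetCard, card_powersetCard] at key ⊢
  rwa [card_sdiff_of_subset hA, card_sdiff_of_subset hB,
    card_sdiff_of_subset (union_subset hA hB)] at key

end

/-- With main blocks of sizes 2 and 3 and an additional block of size `m`, the number of
4-element subsets meeting both main blocks equals `3(m+1)^2 + 2` (the number of points on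
the surface of a square pyramid). -/
theorem insets_square_pyramid_surface {α : Type} [DecidableEq α] (m : ℕ)
    (X₁ X₂ Y : Finset α)
    (h12 : Disjoint X₁ X₂) (h1Y : Disjoint X₁ Y) (h2Y : Disjoint X₂ Y)
    (hX₁ : X₁.card = 2) (hX₂ : X₂.card = 3) (hY : Y.card = m) :
    (((X₁ ∪ X₂ ∪ Y).powersetCard 4).filter
        (fun S => (S ∩ X₁).Nonempty ∧ (S ∩ X₂).Nonempty)).card
      = 3 * (m + 1) ^ 2 + 2 := by
  have h12_card : #(X₁ ∪ X₂) = 5 := by rw [card_union_of_disjoint h12, hX₁, hX₂]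
  have hU_card : #(X₁ ∪ X₂ ∪ Y) = m + 5 := by
    rw [card_union_of_disjoint (disjoint_union_left.mpr ⟨h1Y, h2Y⟩), h12_card, hY, add_comm]
  have count := card_filter_powersetCard_inter_nonempty_and (X₁ ∪ X₂ ∪ Y) X₁ X₂
    (subset_union_left.trans subset_union_left) (subset_union_right.trans subset_union_left) 4
  rw [hU_card, hX₁, hX₂, h12_card, show m + 5 - 2 = m + 3 by omega,
    show m + 5 - 3 = m + 2 by omega, Nat.add_sub_cancel] at count
  have identity := choose_four_add_choose_four m
  omega
end

section
/- For m ≥ 1 and q ≥ 1: the number of 4-insets of a set with main blocks of sizes 2 and q and an additional block of size m equals m^2 + (m+1)^2 + ... + (m+q−1)^2. -/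
/-!
A 4-set fails to meet both `X₁` and `X₂` exactly when it lies in the complement of one of them, so
inclusion–exclusion counts the insets as `C(m+q+2,4) − C(m+q,4) − C(m+2,4) + C(m,4)`. As a
function of `q` this telescopes into the sum of squares, because its increment
`C(n+2,3) − C(n,3)` equals `C(n,2) + C(n+1,2) = n²` for `n = m + q`.
-/

open Finset

namespace Nat

theorem choose_two_succ (n : ℕ) : (n + 1).choose 2 = n + n.choose 2 := by
  rw [choose_succ_succ', choose_one_right]

theorem choose_two_add_choose_two_succ (n : ℕ) : n.choose 2 + (n + 1).choose 2 = n ^ 2 := by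
  induction n with
  | zero => rfl
  | succ n ih =>
    rw [choose_two_succ (n + 1), choose_two_succ n] at *
    linear_combination ih

theorem choose_three_add_two (n : ℕ) : (n + 2).choose 3 = n ^ 2 + n.choose 3 := by
  have h : (n + 1).choose 3 = n.choose 2 + n.choose 3 := choose_succ_succ' n 2
  rw [choose_succ_succ', h, ← choose_two_add_choose_two_succ]
  ring

theorem sum_range_sq_add_choose_four (m q : ℕ) :
    ∑ j ∈ range q, (m + j) ^ 2 + (m + q).choose 4 + (m + 2).choose 4
      = (m + q + 2).choose 4 + m.choose 4 := by
  induction q with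
  | zero => simp [add_comm]
  | succ q ih =>
    have hlow : (m + q + 1).choose 4 = (m + q).choose 3 + (m + q).choose 4 :=
      choose_succ_succ' _ _
    have htop : (m + q + 3).choose 4 = (m + q + 2).choose 3 + (m + q + 2).choose 4 :=
      choose_succ_succ' _ _
    rw [sum_range_succ, ← add_assoc, hlow, show m + q + 1 + 2 = m + q + 3 by ring, htop,
      choose_three_add_two]
    linear_combination ih

end Nat

namespace Finset

variable {α : Type*}

theorem card_filter_and_add_card_filter_not_add_card_filter_not (s : Finset α)
    (p q : α → Prop) [DecidablePred p] [DecidablePred q] :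
    #{x ∈ s | p x ∧ q x} + #{x ∈ s | ¬p x} + #{x ∈ s | ¬q x} = #s + #{x ∈ s | ¬p x ∧ ¬q x} := by
  classical
  have hunion : {x ∈ s | ¬(p x ∧ q x)} = {x ∈ s | ¬p x} ∪ {x ∈ s | ¬q x} := by
    rw [← filter_or]
    simp only [not_and_or]
  have hinter : {x ∈ s | ¬p x} ∩ {x ∈ s | ¬q x} = {x ∈ s | ¬p x ∧ ¬q x} :=
    (filter_and _ _ _).symm
  have hincl_excl := card_union_add_card_inter {x ∈ s | ¬p x} {x ∈ s | ¬q x}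
  rw [← hunion, hinter] at hincl_excl
  have hcompl := card_filter_add_card_filter_not (s := s) (fun x => p x ∧ q x)
  omega

variable [DecidableEq α]

theorem filter_powersetCard_not_inter_nonempty (s a : Finset α) (k : ℕ) :
    {S ∈ s.powersetCard k | ¬(S ∩ a).Nonempty} = (s \ a).powersetCard k := by
  ext S
  simp only [mem_filter, mem_powersetCard, subset_sdiff, not_nonempty_iff_eq_empty,
    ← disjoint_iff_inter_eq_empty]
  tauto

theorem card_powersetCard_filter_inter_nonempty_and (s a b : Finset α) (k : ℕ) :
    #{S ∈ s.powersetCard k | (S ∩ a).Nonempty ∧ (S ∩ b).Nonempty}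
        + (#(s \ a)).choose k + (#(s \ b)).choose k
      = (#s).choose k + (#(s \ (a ∪ b))).choose k := by
  have hab : {S ∈ s.powersetCard k | ¬(S ∩ a).Nonempty ∧ ¬(S ∩ b).Nonempty}
      = (s \ (a ∪ b)).powersetCard k := by
    rw [← filter_filter, filter_powersetCard_not_inter_nonempty,
      filter_powersetCard_not_inter_nonempty, sdiff_sdiff_left, sup_eq_union]
  simpa only [filter_powersetCard_not_inter_nonempty, hab, card_powersetCard] using
    card_filter_and_add_card_filter_not_add_card_filter_not (s.powersetCard k)
      (fun S => (S ∩ a).Nonempty) (fun S => (S ∩ b).Nonempty)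

end Finset

theorem insets_truncated_square_pyramidal_general {α : Type} [DecidableEq α] (m q : ℕ)
    (X₁ X₂ Y : Finset α)
    (h12 : Disjoint X₁ X₂) (h1Y : Disjoint X₁ Y) (h2Y : Disjoint X₂ Y)
    (hX₁ : X₁.card = 2) (hX₂ : X₂.card = q) (hY : Y.card = m) :
    (((X₁ ∪ X₂ ∪ Y).powersetCard 4).filter
        (fun S => (S ∩ X₁).Nonempty ∧ (S ∩ X₂).Nonempty)).card
      = ∑ j ∈ Finset.range q, (m + j) ^ 2 := by
  set s := X₁ ∪ X₂ ∪ Y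
  have hs : #s = m + q + 2 := by
    rw [card_union_of_disjoint (disjoint_union_left.2 ⟨h1Y, h2Y⟩), card_union_of_disjoint h12]
    omega
  have hs₁ : #(s \ X₁) = m + q := by
    rw [card_sdiff_of_subset (subset_union_left.trans subset_union_left), hs, hX₁]
    omega
  have hs₂ : #(s \ X₂) = m + 2 := by
    rw [card_sdiff_of_subset (subset_union_right.trans subset_union_left), hs, hX₂]
    omega
  have hs₁₂ : #(s \ (X₁ ∪ X₂)) = m := by
    rw [card_sdiff_of_subset subset_union_left, hs, card_union_of_disjoint h12, hX₁, hX₂]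
    omega
  have hcount := card_powersetCard_filter_inter_nonempty_and s X₁ X₂ 4
  rw [hs, hs₁, hs₂, hs₁₂] at hcount
  have hsum := Nat.sum_range_sq_add_choose_four m q
  omega

/-- With main blocks of sizes 2 and `q` and an additional block of size `m`, the number of
4-element subsets meeting both main blocks equals `m² + (m+1)² + ⋯ + (m+q-1)²`. -/
theorem insets_truncated_square_pyramidal {α : Type} [DecidableEq α] (m q : ℕ)
    (hm : 1 ≤ m) (hq : 1 ≤ q) (X₁ X₂ Y : Finset α)
    (h12 : Disjoint X₁ X₂) (h1Y : Disjoint X₁ Y) (h2Y : Disjoint X₂ Y)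
    (hX₁ : X₁.card = 2) (hX₂ : X₂.card = q) (hY : Y.card = m) :
    (((X₁ ∪ X₂ ∪ Y).powersetCard 4).filter
        (fun S => (S ∩ X₁).Nonempty ∧ (S ∩ X₂).Nonempty)).card
      = ∑ j ∈ Finset.range q, (m + j) ^ 2 :=
  insets_truncated_square_pyramidal_general m q X₁ X₂ Y h12 h1Y h2Y hX₁ hX₂ hY
end

section
/- The number of integer solutions (x_1,...,x_n) of |x_1| + |x_2| + ... + |x_n| ≤ m equals Σ_{i=0}^{m} 2^i C(m,i) C(n,i), and the number of integer solutions of |x_1| + ... + |x_n| = m (for m ≥ 1) equals Σ_{i=0}^{m} 2^i C(m,i) C(n,i) − Σ_{i=0}^{m−1} 2^i C(m−1,i) C(n,i). -/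
/-!
Slicing the lattice points of the `ℓ¹`-ball of radius `m` in `ℤⁿ⁺¹` by the value `k` of the
first coordinate leaves an `ℓ¹`-ball of radius `m - |k|` in `ℤⁿ`, so the counts satisfy
`B(n+1, m) = B(n, m) + 2 ∑_{j<m} B(n, j)` with `B(0, m) = 1`. By Pascal's rule and the
hockey-stick identity the Delannoy sums obey the same recursion. The sphere of radius `m ≥ 1`
is the ball of radius `m` minus the ball of radius `m - 1`.
-/

open Finset

def delannoy (m n : ℕ) : ℕ := ∑ i ∈ range (m + 1), 2 ^ i * m.choose i * n.choose i

theorem sum_range_choose_eq_choose_succ (m i : ℕ) : ∑ j ∈ range m, j.choose i = m.choose (i + 1) := by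
  induction m with
  | zero => simp
  | succ m ih => rw [sum_range_succ, ih, Nat.choose_succ_succ', add_comm]

theorem delannoy_eq_sum_range {m N : ℕ} (n : ℕ) (h : m < N) :
    delannoy m n = ∑ i ∈ range N, 2 ^ i * m.choose i * n.choose i := by
  refine sum_subset (range_subset_range.2 h) fun i _ hi => ?_
  rw [Nat.choose_eq_zero_of_lt (by simpa using hi), mul_zero, zero_mul]

theorem delannoy_zero_right (m : ℕ) : delannoy m 0 = 1 := by
  simp [delannoy, sum_range_succ']

theorem two_mul_sum_delannoy (m n : ℕ) :
    2 * ∑ j ∈ range m, delannoy j n =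
      ∑ i ∈ range m, 2 ^ (i + 1) * m.choose (i + 1) * n.choose i := by
  calc 2 * ∑ j ∈ range m, delannoy j n
      = 2 * ∑ i ∈ range m, ∑ j ∈ range m, 2 ^ i * j.choose i * n.choose i := by
        rw [sum_comm]
        exact congrArg _ (sum_congr rfl fun j hj => delannoy_eq_sum_range n (mem_range.1 hj))
    _ = 2 * ∑ i ∈ range m, 2 ^ i * m.choose (i + 1) * n.choose i := by
        simp only [← sum_mul, ← mul_sum, sum_range_choose_eq_choose_succ]
    _ = _ := by rw [mul_sum]; ring_nf

theorem delannoy_succ_right (m n : ℕ) :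
    delannoy m (n + 1) = delannoy m n + 2 * ∑ j ∈ range m, delannoy j n := by
  rw [two_mul_sum_delannoy, delannoy, delannoy, sum_range_succ', sum_range_succ' _ m]
  simp only [Nat.choose_succ_succ', Nat.choose_zero_right, mul_add, sum_add_distrib]
  ring

noncomputable def l1Ball (n r : ℕ) : Finset (Fin n → ℤ) :=
  (Fintype.piFinset fun _ : Fin n => Icc (-(r : ℤ)) r).filter fun x => ∑ i, |x i| ≤ r

noncomputable def l1Sphere (n r : ℕ) : Finset (Fin n → ℤ) :=
  (Fintype.piFinset fun _ : Fin n => Icc (-(r : ℤ)) r).filter fun x => ∑ i, |x i| = r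

theorem abs_le_sum_abs {ι : Type*} [Fintype ι] (x : ι → ℤ) (i : ι) : |x i| ≤ ∑ j, |x j| :=
  single_le_sum (f := fun j => |x j|) (fun _ _ => abs_nonneg _) (mem_univ i)

theorem mem_l1Ball {n r : ℕ} {x : Fin n → ℤ} : x ∈ l1Ball n r ↔ ∑ i, |x i| ≤ r := by
  simp only [l1Ball, mem_filter, Fintype.mem_piFinset, mem_Icc, ← abs_le, and_iff_right_iff_imp]
  exact fun h i => (abs_le_sum_abs x i).trans h

theorem card_l1Ball_zero (r : ℕ) : #(l1Ball 0 r) = 1 := by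
  simp [l1Ball]

theorem sum_Icc_natAbs {M : Type*} [AddCommMonoid M] (m : ℕ) (g : ℕ → M) :
    ∑ k ∈ Icc (-(m : ℤ)) m, g (m - k.natAbs) = g m + 2 • ∑ j ∈ range m, g j := by
  induction m generalizing g with
  | zero => simp
  | succ m ih =>
    have hIcc : Icc (-((m + 1 : ℕ) : ℤ)) (m + 1 : ℕ)
        = insert (-((m + 1 : ℕ) : ℤ)) (insert ((m + 1 : ℕ) : ℤ) (Icc (-(m : ℤ)) m)) := by
      ext k; simp only [mem_Icc, mem_insert]; omega
    have hshift : ∑ k ∈ Icc (-(m : ℤ)) m, g (m + 1 - k.natAbs)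
        = ∑ k ∈ Icc (-(m : ℤ)) m, g (m - k.natAbs + 1) :=
      sum_congr rfl fun k hk => by rw [mem_Icc] at hk; congr 1; omega
    rw [hIcc, sum_insert (by simp; omega), sum_insert (by simp), hshift, ih (g <| · + 1),
      sum_range_succ' g]
    simp only [Int.natAbs_neg, Int.natAbs_natCast, Nat.sub_self]
    abel

theorem card_l1Ball_succ_eq_sum (n m : ℕ) :
    #(l1Ball (n + 1) m) = ∑ k ∈ Icc (-(m : ℤ)) m, #(l1Ball n (m - k.natAbs)) := by
  rw [card_eq_sum_card_fiberwise (f := fun x => x 0)]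
  · refine sum_congr rfl fun k hk => ?_
    have hkm : k.natAbs ≤ m := by rw [mem_Icc] at hk; omega
    refine card_nbij' Fin.tail (Fin.cons (α := fun _ => ℤ) k) (fun x hx => ?_)
      (fun y hy => ?_) (fun x hx => ?_) (fun y _ => Fin.tail_cons (α := fun _ => ℤ) k y)
    · simp only [coe_filter, Set.mem_ofPred_eq, mem_l1Ball, Fin.sum_univ_succ] at hx
      rw [Int.abs_eq_natAbs] at hx
      rw [mem_coe, mem_l1Ball]
      simp only [Fin.tail]
      omega
    · rw [mem_coe, mem_l1Ball] at hy
      simp only [coe_filter, Set.mem_ofPred_eq, mem_l1Ball, Fin.sum_univ_succ, Fin.cons_zero,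
        Fin.cons_succ, Int.abs_eq_natAbs k, and_true]
      omega
    · simp only [coe_filter, Set.mem_ofPred_eq] at hx
      rw [← hx.2, Fin.cons_self_tail]
  · intro x hx
    rw [mem_coe, mem_l1Ball] at hx
    rw [mem_coe, mem_Icc, ← abs_le]
    exact (abs_le_sum_abs x 0).trans hx

theorem card_l1Ball_succ (n m : ℕ) :
    #(l1Ball (n + 1) m) = #(l1Ball n m) + 2 * ∑ j ∈ range m, #(l1Ball n j) := by
  rw [card_l1Ball_succ_eq_sum, sum_Icc_natAbs m (fun t => #(l1Ball n t)), smul_eq_mul]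

theorem card_l1Ball (n m : ℕ) : #(l1Ball n m) = delannoy m n := by
  induction n generalizing m with
  | zero => rw [card_l1Ball_zero, delannoy_zero_right]
  | succ n ih => simp only [card_l1Ball_succ, delannoy_succ_right, ih]

theorem card_l1Sphere_add_card_l1Ball (n m : ℕ) :
    #(l1Sphere n (m + 1)) + #(l1Ball n m) = #(l1Ball n (m + 1)) := by
  rw [← card_filter_add_card_filter_not (s := l1Ball n (m + 1)) fun x : Fin n → ℤ => ∑ i, |x i| = (m + 1 : ℕ)]
  congr 2
  · rw [l1Ball, filter_filter]
    exact filter_congr fun x _ => (and_iff_right_of_imp le_of_eq).symm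
  · ext x
    simp only [mem_filter, mem_l1Ball]
    omega

theorem card_l1Sphere_succ (n m : ℕ) :
    #(l1Sphere n (m + 1)) = delannoy (m + 1) n - delannoy m n := by
  have h := card_l1Sphere_add_card_l1Ball n m
  rw [card_l1Ball, card_l1Ball] at h
  omega

/-- Crystal ball and coordination sequences of the cubic lattice `ℤⁿ`:
the number of integer solutions of `|x₁| + ⋯ + |xₙ| ≤ m` equals
`∑_{i=0}^{m} 2^i C(m,i) C(n,i)`, and for `m ≥ 1` the number of integer solutions of
`|x₁| + ⋯ + |xₙ| = m` equals
`∑_{i=0}^{m} 2^i C(m,i) C(n,i) - ∑_{i=0}^{m-1} 2^i C(m-1,i) C(n,i)`.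
(Every solution satisfies `|xᵢ| ≤ m`, so solutions are counted inside the box
`[-m, m]ⁿ`.) -/
theorem cubic_lattice_solutions (m n : ℕ) :
    ((Fintype.piFinset (fun _ : Fin n => Finset.Icc (-(m : ℤ)) (m : ℤ))).filter
        (fun x => ∑ i, |x i| ≤ (m : ℤ))).card
      = ∑ i ∈ Finset.range (m + 1), 2 ^ i * m.choose i * n.choose i ∧
    (1 ≤ m →
      ((Fintype.piFinset (fun _ : Fin n => Finset.Icc (-(m : ℤ)) (m : ℤ))).filter
          (fun x => ∑ i, |x i| = (m : ℤ))).card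
        = ∑ i ∈ Finset.range (m + 1), 2 ^ i * m.choose i * n.choose i
          - ∑ i ∈ Finset.range m, 2 ^ i * (m - 1).choose i * n.choose i) := by
  refine ⟨card_l1Ball n m, fun hm => ?_⟩
  obtain ⟨m, rfl⟩ := Nat.exists_eq_add_of_le' hm
  exact card_l1Sphere_succ n m
end
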